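/- For the second-kind half-line quantum walk with coin parameters γ_j = 1/(r+j) (j ≥ 1) and off-diagonal coin at the origin: μ_n(j) = 0 whenever n + j is odd, and for each fixed j ∈ ℕ the limit along the even-parity subsequence satisfies lim_{m→∞} μ_{j+2m}(j) = (1/(r+1))² if j = 0, and lim_{m→∞} μ_{j+2m}(j) = 2r/((r+1)(r−1+j)(r+1+j)) if j ≥ 1. (Localization with power-law decay around the origin for the second-kind walk.) -/

import Mathlib

open Filter Topology Matrix

/-- Coin parameter `γ_j = 1/(r+j)`. -/
noncomputable def gam (r : ℝ) (j : ℕ) : ℝ := 1 / (r + j)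

/-- `ρ_j = √(1 - γ_j²)`. -/
noncomputable def rho (r : ℝ) (j : ℕ) : ℝ := Real.sqrt (1 - gam r j ^ 2)

/-- `P_j = [[ρ_j, γ_j], [0, 0]]` (used for `j ≥ 1`). -/
noncomputable def Pmat (r : ℝ) (j : ℕ) : Matrix (Fin 2) (Fin 2) ℂ :=
  !![(rho r j : ℂ), (gam r j : ℂ); 0, 0]

/-- `Q_j = [[0, 0], [−γ_j, ρ_j]]` for `j ≥ 1`, and the off-diagonal-coin value
`Q_0 = [[0, 0], [1, 0]]` at the origin. -/
noncomputable def Qmat (r : ℝ) : ℕ → Matrix (Fin 2) (Fin 2) ℂ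
  | 0 => !![0, 0; 1, 0]
  | j + 1 => !![0, 0; (-(gam r (j + 1)) : ℂ), (rho r (j + 1) : ℂ)]

/-- Weight matrices `Ξ_n(j)` of the second-kind half-line quantum walk with
coin parameters `γ_j = 1/(r+j)` (`j ≥ 1`) and off-diagonal coin at the origin. -/
noncomputable def Xi (r : ℝ) : ℕ → ℕ → Matrix (Fin 2) (Fin 2) ℂ
  | 0, 0 => 1
  | 0, _ + 1 => 0
  | n + 1, 0 => Pmat r 1 * Xi r n 1
  | n + 1, j + 1 => Pmat r (j + 2) * Xi r n (j + 2) + Qmat r j * Xi r n j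

/-- Position distribution `μ_n(j) = ‖Ξ_n(j) φ_0‖²` for the initial coin state
`φ_0 = (1, 0)` (squared Euclidean norm of `ℂ²`). -/
noncomputable def mu (r : ℝ) (n j : ℕ) : ℝ :=
  ‖(Xi r n j).mulVec ![1, 0] 0‖ ^ 2
    + ‖(Xi r n j).mulVec ![1, 0] 1‖ ^ 2

/-!
The walk started at the origin has an explicit closed form. `Ξ_n(j) φ₀` vanishes unless `j ≤ n`
and `n + j` is even. On the light cone `j = n` it is the front vector `(1, 0)` for `j = 0` and
`(0, π_{j-1})` for `j ≥ 1`, with `π_j = ρ_1 ⋯ ρ_j`. Strictly inside the cone it is the vector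
`w(j) = (a_j, a_{j-1})` (with `a_{-1} = 0`), which does not depend on `n`, where
`a_j² = r / ((r+1)(r+j)(r+j+1))`. Hence `μ_{j+2m}(j) = a_j² + a_{j-1}²` for every `m ≥ 1`.

The closed form is checked by induction on `n`. `P_{j+1}` maps both `w(j+1)` and the front vector
at `j+1` to `(a_j, 0)`, while `Q_j` maps `w(j)` to `(0, a_j)` and moves the front one step out.
-/

lemma Xi_eq_zero_of_lt (r : ℝ) {n j : ℕ} (h : n < j) : Xi r n j = 0 := by
  induction n generalizing j with
  | zero => obtain ⟨j, rfl⟩ := Nat.exists_eq_add_one.mpr h; rfl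
  | succ n ih =>
    obtain ⟨j, rfl⟩ := Nat.exists_eq_add_one.mpr (n.succ_pos.trans h)
    rw [Xi, ih (by omega), ih (by omega), mul_zero, mul_zero, add_zero]

lemma Xi_eq_zero_of_odd (r : ℝ) {n j : ℕ} (h : Odd (n + j)) : Xi r n j = 0 := by
  rw [Nat.odd_iff] at h
  induction n generalizing j with
  | zero =>
    cases j with
    | zero => omega
    | succ j => rfl
  | succ n ih =>
    cases j with
    | zero => rw [Xi, ih (by omega), mul_zero]
    | succ j => rw [Xi, ih (by omega), ih (by omega), mul_zero, mul_zero, add_zero]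

section ClosedForm

variable {r : ℝ}

noncomputable def stationaryAmp (r : ℝ) (j : ℕ) : ℝ :=
  Real.sqrt (r / ((r + 1) * (r + j) * (r + j + 1)))

/-- `π_j = ρ_1 ⋯ ρ_j` in closed form: the product telescopes since
`ρ_i² = (r+i-1)(r+i+1)/(r+i)²`. -/
noncomputable def frontAmp (r : ℝ) (j : ℕ) : ℝ :=
  Real.sqrt (r * (r + j + 1) / ((r + 1) * (r + j)))

lemma gam_succ (j : ℕ) : gam r (j + 1) = 1 / (r + j + 1) := by
  rw [gam, Nat.cast_succ, add_assoc]

lemma rho_succ_sq (hr : 0 < r) (j : ℕ) :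
    rho r (j + 1) ^ 2 = (r + j) * (r + j + 2) / (r + j + 1) ^ 2 := by
  have h : 1 - gam r (j + 1) ^ 2 = (r + j) * (r + j + 2) / (r + j + 1) ^ 2 := by
    rw [gam_succ]
    field_simp
    ring
  rw [rho, Real.sq_sqrt (h ▸ by positivity), h]

lemma stationaryAmp_sq (hr : 0 < r) (j : ℕ) :
    stationaryAmp r j ^ 2 = r / ((r + 1) * (r + j) * (r + j + 1)) :=
  Real.sq_sqrt (by positivity)

lemma frontAmp_sq (hr : 0 < r) (j : ℕ) :
    frontAmp r j ^ 2 = r * (r + j + 1) / ((r + 1) * (r + j)) :=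
  Real.sq_sqrt (by positivity)

lemma frontAmp_zero (hr : 0 < r) : frontAmp r 0 = 1 := by
  rw [frontAmp, Nat.cast_zero, add_zero, mul_comm (r + 1), div_self (by positivity),
    Real.sqrt_one]

lemma rho_mul_stationaryAmp_succ (hr : 0 < r) (j : ℕ) :
    rho r (j + 1) * stationaryAmp r (j + 1) = (r + j) / (r + j + 1) * stationaryAmp r j := by
  refine (pow_left_inj₀ (by simp only [rho, stationaryAmp]; positivity)
    (by simp only [stationaryAmp]; positivity) two_ne_zero).mp ?_
  rw [mul_pow, mul_pow, rho_succ_sq hr, stationaryAmp_sq hr, stationaryAmp_sq hr, Nat.cast_succ]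
  field_simp
  ring

lemma rho_mul_stationaryAmp (hr : 0 < r) (j : ℕ) :
    rho r (j + 1) * stationaryAmp r j = (r + j + 2) / (r + j + 1) * stationaryAmp r (j + 1) := by
  refine (pow_left_inj₀ (by simp only [rho, stationaryAmp]; positivity)
    (by simp only [stationaryAmp]; positivity) two_ne_zero).mp ?_
  rw [mul_pow, mul_pow, rho_succ_sq hr, stationaryAmp_sq hr, stationaryAmp_sq hr, Nat.cast_succ]
  field_simp
  ring

lemma rho_mul_frontAmp (hr : 0 < r) (j : ℕ) :
    rho r (j + 1) * frontAmp r j = frontAmp r (j + 1) := by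
  refine (pow_left_inj₀ (by simp only [rho, frontAmp]; positivity)
    (by simp only [frontAmp]; positivity) two_ne_zero).mp ?_
  rw [mul_pow, rho_succ_sq hr, frontAmp_sq hr, frontAmp_sq hr, Nat.cast_succ]
  field_simp
  ring

lemma gam_mul_frontAmp (hr : 0 < r) (j : ℕ) :
    gam r (j + 1) * frontAmp r j = stationaryAmp r j := by
  refine (pow_left_inj₀ (by simp only [gam, frontAmp]; positivity)
    (by simp only [stationaryAmp]; positivity) two_ne_zero).mp ?_
  rw [gam_succ, mul_pow, frontAmp_sq hr, stationaryAmp_sq hr]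
  field_simp

noncomputable def stationaryVec (r : ℝ) : ℕ → Fin 2 → ℂ
  | 0 => ![(stationaryAmp r 0 : ℂ), 0]
  | j + 1 => ![(stationaryAmp r (j + 1) : ℂ), (stationaryAmp r j : ℂ)]

noncomputable def frontVec (r : ℝ) : ℕ → Fin 2 → ℂ
  | 0 => ![1, 0]
  | j + 1 => ![0, (frontAmp r j : ℂ)]

lemma Pmat_mulVec_stationaryVec (hr : 0 < r) (j : ℕ) :
    Pmat r (j + 1) *ᵥ stationaryVec r (j + 1) = ![(stationaryAmp r j : ℂ), 0] := by
  have h : rho r (j + 1) * stationaryAmp r (j + 1) + gam r (j + 1) * stationaryAmp r j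
      = stationaryAmp r j := by
    rw [rho_mul_stationaryAmp_succ hr, gam_succ]
    field_simp
  simp only [Pmat, stationaryVec, mulVec_fin_two]
  simp
  exact_mod_cast h

lemma Pmat_mulVec_frontVec (hr : 0 < r) (j : ℕ) :
    Pmat r (j + 1) *ᵥ frontVec r (j + 1) = ![(stationaryAmp r j : ℂ), 0] := by
  simp only [Pmat, frontVec, mulVec_fin_two]
  simp [← gam_mul_frontAmp hr]

lemma Qmat_mulVec_stationaryVec (hr : 0 < r) (j : ℕ) :
    Qmat r j *ᵥ stationaryVec r j = ![0, (stationaryAmp r j : ℂ)] := by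
  cases j with
  | zero =>
    simp only [Qmat, stationaryVec, mulVec_fin_two]
    simp
  | succ j =>
    have h : -(gam r (j + 1) * stationaryAmp r (j + 1)) + rho r (j + 1) * stationaryAmp r j
        = stationaryAmp r (j + 1) := by
      rw [rho_mul_stationaryAmp hr, gam_succ]
      field_simp
      ring
    simp only [Qmat, stationaryVec, mulVec_fin_two]
    simp
    exact_mod_cast h

lemma Qmat_mulVec_frontVec (hr : 0 < r) (j : ℕ) :
    Qmat r j *ᵥ frontVec r j = frontVec r (j + 1) := by
  cases j with
  | zero =>
    simp only [Qmat, frontVec, mulVec_fin_two]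
    simp [frontAmp_zero hr]
  | succ j =>
    simp only [Qmat, frontVec, mulVec_fin_two]
    simp [← rho_mul_frontAmp hr]

lemma Xi_mulVec_self (hr : 0 < r) (n : ℕ) : Xi r n n *ᵥ ![1, 0] = frontVec r n := by
  induction n with
  | zero => rw [Xi, one_mulVec]; rfl
  | succ n ih =>
    rw [Xi, Xi_eq_zero_of_lt r (by omega), mul_zero, zero_add, ← mulVec_mulVec, ih,
      Qmat_mulVec_frontVec hr]

lemma Xi_mulVec_of_lt_of_even (hr : 0 < r) {n j : ℕ} (hjn : j < n) (he : Even (n + j)) :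
    Xi r n j *ᵥ ![1, 0] = stationaryVec r j := by
  rw [Nat.even_iff] at he
  induction n generalizing j with
  | zero => omega
  | succ n ih =>
    have incoming (i : ℕ) (hin : i < n) (hp : (n + i) % 2 = 1) :
        Pmat r (i + 1) *ᵥ (Xi r n (i + 1) *ᵥ ![1, 0]) = ![(stationaryAmp r i : ℂ), 0] := by
      rcases (Nat.succ_le_of_lt hin).eq_or_lt with h | h
      · rw [← h, Xi_mulVec_self hr, Pmat_mulVec_frontVec hr]
      · rw [ih h (by omega), Pmat_mulVec_stationaryVec hr]
    cases j with
    | zero => rw [Xi, ← mulVec_mulVec, incoming 0 (by omega) (by omega)]; rfl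
    | succ j =>
      rw [Xi, add_mulVec, ← mulVec_mulVec, ← mulVec_mulVec,
        incoming (j + 1) (by omega) (by omega), ih (by omega) (by omega),
        Qmat_mulVec_stationaryVec hr]
      ext i
      fin_cases i <;> simp [stationaryVec]

lemma tendsto_mu_add_two_mul (hr : 0 < r) (j : ℕ) :
    Tendsto (fun m : ℕ => mu r (j + 2 * m) j) atTop
      (𝓝 (‖stationaryVec r j 0‖ ^ 2 + ‖stationaryVec r j 1‖ ^ 2)) := by
  refine tendsto_const_nhds.congr' ?_
  filter_upwards [eventually_ge_atTop 1] with m hm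
  rw [mu, Xi_mulVec_of_lt_of_even hr (by omega) ⟨j + m, by ring⟩]

lemma norm_sq_stationaryVec_zero (hr : 0 < r) :
    ‖stationaryVec r 0 0‖ ^ 2 + ‖stationaryVec r 0 1‖ ^ 2 = (1 / (r + 1)) ^ 2 := by
  simp only [stationaryVec]
  simp [stationaryAmp_sq hr]
  field_simp

lemma norm_sq_stationaryVec_succ (hr : 0 < r) (k : ℕ) :
    ‖stationaryVec r (k + 1) 0‖ ^ 2 + ‖stationaryVec r (k + 1) 1‖ ^ 2
      = 2 * r / ((r + 1) * (r - 1 + (k + 1 : ℕ)) * (r + 1 + (k + 1 : ℕ))) := by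
  simp only [stationaryVec]
  simp [stationaryAmp_sq hr]
  field_simp
  ring

end ClosedForm

/-- Localization with power-law decay around the origin for the second-kind walk:
`μ_n(j) = 0` when `n+j` is odd, and along the even-parity subsequence
`μ_{j+2m}(j)` converges to `(1/(r+1))²` for `j = 0` and to
`2r/((r+1)(r−1+j)(r+1+j))` for `j ≥ 1`. -/
theorem localization_origin_second_kind (r : ℝ) (hr : 1 < r) :
    (∀ n j : ℕ, Odd (n + j) → mu r n j = 0) ∧
    Tendsto (fun m : ℕ => mu r (0 + 2 * m) 0) atTop (nhds ((1 / (r + 1)) ^ 2)) ∧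
    ∀ j : ℕ, 1 ≤ j →
      Tendsto (fun m : ℕ => mu r (j + 2 * m) j) atTop
        (nhds (2 * r / ((r + 1) * (r - 1 + j) * (r + 1 + j)))) := by
  have hr₀ : 0 < r := by linarith
  refine ⟨fun n j hodd => ?_, ?_, fun j hj => ?_⟩
  · simp [mu, Xi_eq_zero_of_odd r hodd]
  · rw [← norm_sq_stationaryVec_zero hr₀]
    exact tendsto_mu_add_two_mul hr₀ 0
  · obtain ⟨k, rfl⟩ := Nat.exists_eq_add_one.mpr hj
    rw [← norm_sq_stationaryVec_succ hr₀]
    exact tendsto_mu_add_two_mul hr₀ (k + 1)
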